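/- Let $G$ be a connected non-bipartite graph containing an induced odd cycle $G_0$ and a vertex $v_0$ not in $G_0$ and not adjacent to any vertex of $G_0$. Then for every minimal vertex cover $C$ of $G$, the prime ideal $Q = (t, \{x_it\}_{i\ne v_0}, \{x_ix_jt\}_{i\in N_G(v_0), j\in N_G(i)\setminus\{v_0\}})$ of $R_G$ contains a minimal prime $P$ of $(t)$ which is distinct from all the ideals $P_C = (x_Ft : F \text{ a face of } G, F\subseteq C)$ and distinct from $(t,x_1t,\dots,x_nt)$. -/

import Mathlib

open MvPolynomial

set_option synthInstance.maxHeartbeats 1000000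

noncomputable section

/-- The ambient polynomial ring `K[x_i : i ∈ V][t]`, with the variable `none` playing
the role of `t`. -/
abbrev Amb (K V : Type*) [CommSemiring K] := MvPolynomial (Option V) K

variable (K : Type*) [Field K] {V : Type*} [DecidableEq V]

/-- The generator `t`. -/
def tGen : Amb K V := X none

/-- The generator `x_i t`. -/
def vGen (i : V) : Amb K V := X (some i) * X none

/-- The generator `x_i x_j t`. -/
def eGen (i j : V) : Amb K V := X (some i) * X (some j) * X none

variable (G : SimpleGraph V)

/-- The toric ring `R_G = K[t, {x_i t}, {x_i x_j t : {i,j} ∈ E(G)}]` of the graph `G`. -/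
def RG : Subalgebra K (Amb K V) :=
  Algebra.adjoin K
    ({tGen K} ∪ Set.range (vGen K (V := V)) ∪ {p | ∃ i j, G.Adj i j ∧ p = eGen K i j})

/-- The faces of the one-dimensional simplicial complex attached to `G`. -/
def IsFace (F : Finset V) : Prop :=
  F = ∅ ∨ (∃ i, F = {i}) ∨ ∃ i j, G.Adj i j ∧ F = {i, j}

/-- The monomial `x_F t`. -/
def faceMon (F : Finset V) : Amb K V := (∏ i ∈ F, X (some i)) * X none

/-- The ideal `P_0 = (t, x_1 t, …, x_n t)` of `R_G`. -/
def P0 : Ideal (RG K G) :=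
  Ideal.span {u : RG K G | ((u : Amb K V) = tGen K) ∨ ∃ i, (u : Amb K V) = vGen K i}

/-- The principal ideal `(t)` of `R_G`. -/
def tIdeal : Ideal (RG K G) := Ideal.span {u : RG K G | (u : Amb K V) = tGen K}

/-- The ideal `P_C` generated by the monomials `x_F t` for faces `F ⊆ C`. -/
def PC (C : Finset V) : Ideal (RG K G) :=
  Ideal.span {u : RG K G | ∃ F : Finset V, IsFace G F ∧ F ⊆ C ∧ (u : Amb K V) = faceMon K F}

/-- The ideal `Q_i` generated by the monomials `x_F t` for faces `F ∋ i`. -/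
def Qi (i : V) : Ideal (RG K G) :=
  Ideal.span {u : RG K G | ∃ F : Finset V, IsFace G F ∧ i ∈ F ∧ (u : Amb K V) = faceMon K F}

/-- A vertex cover of `G`. -/
def IsVertexCover (C : Finset V) : Prop := ∀ ⦃i j⦄, G.Adj i j → i ∈ C ∨ j ∈ C

/-- A minimal vertex cover of `G`. -/
def IsMinVertexCover (C : Finset V) : Prop :=
  IsVertexCover G C ∧ ∀ C' ⊆ C, IsVertexCover G C' → C' = C

/-- An induced odd cycle of `G`, given by an injective cyclic enumeration of its
vertices such that adjacency holds exactly between consecutive vertices. -/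
def IsInducedOddCycle {V : Type*} (G : SimpleGraph V) (m : ℕ) (c : ZMod m → V) : Prop :=
  3 ≤ m ∧ Odd m ∧ Function.Injective c ∧
    ∀ p q : ZMod m, G.Adj (c p) (c q) ↔ (q = p + 1 ∨ p = q + 1)

/-- The monomial `x^a t^b` of the ambient ring. -/
def monom [Fintype V] (a : V → ℕ) (b : ℕ) : Amb K V :=
  (∏ i, X (some i) ^ a i) * X none ^ b

/-- An element of `R_G` which is a monomial. -/
def IsMonomialElt [Fintype V] (u : RG K G) : Prop :=
  ∃ (a : V → ℕ) (b : ℕ), (u : Amb K V) = monom K a b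

/-- A monomial ideal of `R_G`. -/
def IsMonomialIdeal [Fintype V] (I : Ideal (RG K G)) : Prop :=
  ∃ S : Set (RG K G), (∀ u ∈ S, IsMonomialElt K G u) ∧ I = Ideal.span S

/-- A height one ideal of the domain `R_G`: a nonzero prime all of whose properly
contained primes are zero. -/
def HeightOne (I : Ideal (RG K G)) : Prop :=
  I.IsPrime ∧ I ≠ ⊥ ∧ ∀ J : Ideal (RG K G), J.IsPrime → J < I → J = ⊥

/-- The ideal contains the element `t`. -/
def ContainsT (I : Ideal (RG K G)) : Prop := ∃ u ∈ I, (u : Amb K V) = tGen K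

/-- The canonical ideal of `R_G` (for `R_G` normal): the intersection of all height one
monomial prime ideals. -/
def canonicalIdeal [Fintype V] : Ideal (RG K G) :=
  sInf {P : Ideal (RG K G) | HeightOne K G P ∧ IsMonomialIdeal K G P}

/-- `R_G` is Gorenstein: the canonical ideal (= canonical module) is isomorphic to
`R_G` as an `R_G`-module, equivalently it is a principal ideal, i.e. the canonical
class vanishes. -/
def IsGorensteinToric [Fintype V] : Prop :=
  (canonicalIdeal K G).IsPrincipal

/-- The ideal `Q = (t, {x_i t}_{i ≠ v₀}, {x_i x_j t}_{i ∈ N(v₀), j ∈ N(i) \ {v₀}})`. -/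
def Q8 {n : ℕ} (G : SimpleGraph (Fin n)) (v₀ : Fin n) : Ideal (RG K G) :=
  Ideal.span {u : RG K G |
    (u : Amb K (Fin n)) = tGen K ∨
    (∃ i, i ≠ v₀ ∧ (u : Amb K (Fin n)) = vGen K i) ∨
    ∃ i j, G.Adj v₀ i ∧ G.Adj i j ∧ j ≠ v₀ ∧ (u : Amb K (Fin n)) = eGen K i j}

/-!
Grade `K[x, t]` by `deg t = 2`, `deg x_{v₀} = -2`, `deg x_i = 0` for the neighbours `i` of `v₀`
and `deg x_i = -1` for the other vertices. Every generator of `R_G` then has nonnegative degree,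
and those of positive degree are exactly the generators of `Q`. Hence `Q` is the kernel of the
projection of `R_G` onto its degree zero part, which is multiplicative because all degrees are
nonnegative; so `Q` is prime and contains a minimal prime `P` of `(t)`. The generators
`x_{v₀} t ∈ P₀` and `x_i x_j t ∈ P_C`, for an edge `{i, j}` of the odd cycle inside `C` (which
exists since `C` cannot alternate around an odd cycle), have degree zero, so they lie outside
`Q ⊇ P`.
-/

namespace MvPolynomial

open Finsupp

variable {σ R : Type*} (w : σ → ℤ)

section CommSemiring

variable [CommSemiring R]

def nonnegWeightSubalgebra : Subalgebra R (MvPolynomial σ R) where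
  carrier := {f | ∀ d ∈ f.support, 0 ≤ weight w d}
  mul_mem' {f g} hf hg d hd := by
    classical
    obtain ⟨d₁, h₁, d₂, h₂, rfl⟩ := Finset.mem_add.1 (support_mul f g hd)
    rw [map_add]
    exact add_nonneg (hf d₁ h₁) (hg d₂ h₂)
  add_mem' {f g} hf hg d hd := by
    classical
    rcases Finset.mem_union.1 (support_add hd) with h | h
    exacts [hf d h, hg d h]
  algebraMap_mem' r d hd := by
    rw [algebraMap_eq, ← monomial_zero'] at hd
    rw [Finset.mem_singleton.1 (support_monomial_subset hd), map_zero]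

variable {w}

theorem IsWeightedHomogeneous.mem_nonnegWeightSubalgebra {f : MvPolynomial σ R} {k : ℤ}
    (hf : IsWeightedHomogeneous w f k) (hk : 0 ≤ k) : f ∈ nonnegWeightSubalgebra w :=
  fun _ hd ↦ hf (mem_support_iff.1 hd) ▸ hk

theorem weightedHomogeneousComponent_zero_mul {f g : MvPolynomial σ R}
    (hf : f ∈ nonnegWeightSubalgebra w) (hg : g ∈ nonnegWeightSubalgebra w) :
    weightedHomogeneousComponent w 0 (f * g) =
      weightedHomogeneousComponent w 0 f * weightedHomogeneousComponent w 0 g := by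
  classical
  ext e
  have hprod := (weightedHomogeneousComponent_isWeightedHomogeneous 0 f).mul
    (weightedHomogeneousComponent_isWeightedHomogeneous (w := w) 0 g)
  rw [add_zero] at hprod
  rw [coeff_weightedHomogeneousComponent]
  split_ifs with he
  · rw [coeff_mul, coeff_mul]
    refine Finset.sum_congr rfl fun x hx ↦ ?_
    rw [Finset.HasAntidiagonal.mem_antidiagonal] at hx
    -- two nonnegative weights adding up to `0` both vanish
    have hsum : weight w x.1 + weight w x.2 = 0 := by rw [← map_add, hx, he]
    rw [coeff_weightedHomogeneousComponent, coeff_weightedHomogeneousComponent]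
    by_cases h₁ : coeff x.1 f = 0
    · simp [h₁]
    by_cases h₂ : coeff x.2 g = 0
    · simp [h₂]
    have := hf x.1 (mem_support_iff.2 h₁)
    have := hg x.2 (mem_support_iff.2 h₂)
    rw [if_pos (by omega), if_pos (by omega)]
  · exact (hprod.coeff_eq_zero e he).symm

variable (w) in
def weightZeroHom : nonnegWeightSubalgebra (R := R) w →ₐ[R] MvPolynomial σ R :=
  AlgHom.ofLinearMap ((weightedHomogeneousComponent w 0).comp (Subalgebra.val _).toLinearMap)
    (isWeightedHomogeneous_one R w).weightedHomogeneousComponent_same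
    fun f g ↦ weightedHomogeneousComponent_zero_mul f.2 g.2

end CommSemiring

section CommRing

variable {w} [CommRing R] {S : Set (MvPolynomial σ R)} {T : Set (Algebra.adjoin R S)}

theorem adjoin_le_nonnegWeightSubalgebra
    (hT : ∀ u ∈ T, ∃ k, 0 < k ∧ IsWeightedHomogeneous w (u : MvPolynomial σ R) k)
    (hST : ∀ s (hs : s ∈ S),
      IsWeightedHomogeneous w s 0 ∨ ⟨s, Algebra.subset_adjoin hs⟩ ∈ T) :
    Algebra.adjoin R S ≤ nonnegWeightSubalgebra w := by
  refine Algebra.adjoin_le fun s hs ↦ ?_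
  rcases hST s hs with h | h
  · exact h.mem_nonnegWeightSubalgebra le_rfl
  · obtain ⟨k, hk, h⟩ := hT _ h
    exact h.mem_nonnegWeightSubalgebra hk.le

theorem exists_mem_span_isWeightedHomogeneous_sub
    (hST : ∀ s (hs : s ∈ S),
      IsWeightedHomogeneous w s 0 ∨ ⟨s, Algebra.subset_adjoin hs⟩ ∈ T)
    {f : MvPolynomial σ R} (hf : f ∈ Algebra.adjoin R S) :
    ∃ q ∈ Ideal.span T, IsWeightedHomogeneous w (f - (q : MvPolynomial σ R)) 0 := by
  induction hf using Algebra.adjoin_induction with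
  | mem s hs =>
    rcases hST s hs with h | h
    · exact ⟨0, zero_mem _, by simpa using h⟩
    · exact ⟨_, Ideal.subset_span h, by simpa using isWeightedHomogeneous_zero R w 0⟩
  | algebraMap r => exact ⟨0, zero_mem _, by simpa using isWeightedHomogeneous_C w r⟩
  | add f g _ _ hf hg =>
    obtain ⟨p, hp, hfp⟩ := hf
    obtain ⟨q, hq, hgq⟩ := hg
    refine ⟨p + q, add_mem hp hq, ?_⟩
    convert hfp.add hgq using 1
    push_cast; ring
  | mul f g hf' hg' hf hg =>
    obtain ⟨p, hp, hfp⟩ := hf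
    obtain ⟨q, hq, hgq⟩ := hg
    -- `f g - (p g + (f - p) q) = (f - p) (g - q)`
    refine ⟨p * ⟨g, hg'⟩ + ⟨f - p, sub_mem hf' p.2⟩ * q,
      add_mem (Ideal.mul_mem_right _ _ hp) (Ideal.mul_mem_left _ _ hq), ?_⟩
    convert hfp.mul hgq using 1
    · push_cast; ring
    · rw [add_zero]

theorem weightedHomogeneousComponent_zero_eq_zero_of_mem_span
    (hT : ∀ u ∈ T, ∃ k, 0 < k ∧ IsWeightedHomogeneous w (u : MvPolynomial σ R) k)
    (hST : ∀ s (hs : s ∈ S),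
      IsWeightedHomogeneous w s 0 ∨ ⟨s, Algebra.subset_adjoin hs⟩ ∈ T)
    {u : Algebra.adjoin R S} (hu : u ∈ Ideal.span T) :
    weightedHomogeneousComponent w 0 (u : MvPolynomial σ R) = 0 := by
  have hle := adjoin_le_nonnegWeightSubalgebra hT hST
  induction hu using Submodule.span_induction with
  | mem u hu =>
    obtain ⟨k, hk, h⟩ := hT u hu
    exact h.weightedHomogeneousComponent_ne 0 hk.ne
  | zero => simp
  | add u v _ _ hu hv => simp [hu, hv]
  | smul a u _ hu =>
    rw [smul_eq_mul, Subalgebra.coe_mul,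
      weightedHomogeneousComponent_zero_mul (hle a.2) (hle u.2), hu, mul_zero]

theorem mem_span_iff_weightedHomogeneousComponent_zero_eq_zero
    (hT : ∀ u ∈ T, ∃ k, 0 < k ∧ IsWeightedHomogeneous w (u : MvPolynomial σ R) k)
    (hST : ∀ s (hs : s ∈ S),
      IsWeightedHomogeneous w s 0 ∨ ⟨s, Algebra.subset_adjoin hs⟩ ∈ T)
    (u : Algebra.adjoin R S) :
    u ∈ Ideal.span T ↔ weightedHomogeneousComponent w 0 (u : MvPolynomial σ R) = 0 := by
  refine ⟨weightedHomogeneousComponent_zero_eq_zero_of_mem_span hT hST, fun hu ↦ ?_⟩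
  obtain ⟨q, hq, huq⟩ := exists_mem_span_isWeightedHomogeneous_sub hST u.2
  have hq₀ := weightedHomogeneousComponent_zero_eq_zero_of_mem_span hT hST hq
  have huq' : (u : MvPolynomial σ R) = q := by
    rw [← sub_eq_zero, ← huq.weightedHomogeneousComponent_same, map_sub, hu, hq₀, sub_zero]
  rwa [Subtype.ext huq']

theorem isPrime_span_of_isWeightedHomogeneous [IsDomain R]
    (hT : ∀ u ∈ T, ∃ k, 0 < k ∧ IsWeightedHomogeneous w (u : MvPolynomial σ R) k)
    (hST : ∀ s (hs : s ∈ S),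
      IsWeightedHomogeneous w s 0 ∨ ⟨s, Algebra.subset_adjoin hs⟩ ∈ T) :
    (Ideal.span T).IsPrime := by
  have hle := adjoin_le_nonnegWeightSubalgebra hT hST
  convert RingHom.ker_isPrime ((weightZeroHom w).comp (Subalgebra.inclusion hle))
  exact Ideal.ext (mem_span_iff_weightedHomogeneousComponent_zero_eq_zero hT hST)

end CommRing

end MvPolynomial

section ToricRing

variable (K : Type*) [Field K] {V : Type*}

theorem isWeightedHomogeneous_tGen (w : Option V → ℤ) :
    IsWeightedHomogeneous w (tGen K) (w none) :=
  isWeightedHomogeneous_X K w none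

theorem isWeightedHomogeneous_vGen (w : Option V → ℤ) (i : V) :
    IsWeightedHomogeneous w (vGen K i) (w (some i) + w none) :=
  (isWeightedHomogeneous_X K w _).mul (isWeightedHomogeneous_X K w _)

theorem isWeightedHomogeneous_eGen (w : Option V → ℤ) (i j : V) :
    IsWeightedHomogeneous w (eGen K i j) (w (some i) + w (some j) + w none) :=
  ((isWeightedHomogeneous_X K w _).mul (isWeightedHomogeneous_X K w _)).mul
    (isWeightedHomogeneous_X K w _)

theorem eGen_comm (i j : V) : eGen K i j = eGen K j i := by
  simp only [eGen]; ring

theorem vGen_ne_zero (i : V) : vGen K i ≠ 0 :=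
  mul_ne_zero (X_ne_zero _) (X_ne_zero _)

theorem eGen_ne_zero (i j : V) : eGen K i j ≠ 0 :=
  mul_ne_zero (mul_ne_zero (X_ne_zero _) (X_ne_zero _)) (X_ne_zero _)

theorem faceMon_pair [DecidableEq V] {i j : V} (h : i ≠ j) :
    faceMon K {i, j} = eGen K i j := by
  rw [faceMon, eGen, Finset.prod_pair h]

variable (G : SimpleGraph V)

theorem vGen_mem_RG (i : V) : vGen K i ∈ RG K G :=
  Algebra.subset_adjoin (Or.inl (Or.inr ⟨i, rfl⟩))

theorem eGen_mem_RG {i j : V} (h : G.Adj i j) : eGen K i j ∈ RG K G :=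
  Algebra.subset_adjoin (Or.inr ⟨i, j, h, rfl⟩)

theorem vGen_mem_P0 (i : V) : ⟨vGen K i, vGen_mem_RG K G i⟩ ∈ P0 K G :=
  Ideal.subset_span (Or.inr ⟨i, rfl⟩)

theorem eGen_mem_PC [DecidableEq V] {C : Finset V} {i j : V} (h : G.Adj i j)
    (hi : i ∈ C) (hj : j ∈ C) : ⟨eGen K i j, eGen_mem_RG K G h⟩ ∈ PC K G C := by
  refine Ideal.subset_span
    ⟨{i, j}, Or.inr (Or.inr ⟨i, j, h, rfl⟩), ?_, (faceMon_pair K h.ne).symm⟩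
  simp [Finset.insert_subset_iff, hi, hj]

open Classical in
def starWeight (v₀ : V) : Option V → ℤ
  | none => 2
  | some i => if i = v₀ then -2 else if G.Adj v₀ i then 0 else -1

variable {G} {v₀ : V}

@[simp] theorem starWeight_none : starWeight G v₀ none = 2 := rfl

@[simp] theorem starWeight_self : starWeight G v₀ (some v₀) = -2 := by simp [starWeight]

theorem starWeight_of_adj {i : V} (h : G.Adj v₀ i) : starWeight G v₀ (some i) = 0 := by
  simp [starWeight, h, h.ne']

theorem starWeight_of_not_adj {i : V} (hi : i ≠ v₀) (h : ¬ G.Adj v₀ i) :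
    starWeight G v₀ (some i) = -1 := by
  simp [starWeight, hi, h]

theorem neg_one_le_starWeight {i : V} (hi : i ≠ v₀) : -1 ≤ starWeight G v₀ (some i) := by
  by_cases h : G.Adj v₀ i
  · simp [starWeight_of_adj h]
  · simp [starWeight_of_not_adj hi h]

variable (G v₀) in
def IsQ8Generator (u : Amb K V) : Prop :=
  u = tGen K ∨ (∃ i, i ≠ v₀ ∧ u = vGen K i) ∨
    ∃ i j, G.Adj v₀ i ∧ G.Adj i j ∧ j ≠ v₀ ∧ u = eGen K i j

variable {K}

theorem IsQ8Generator.exists_pos_isWeightedHomogeneous {u : Amb K V}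
    (hu : IsQ8Generator K G v₀ u) :
    ∃ k, 0 < k ∧ IsWeightedHomogeneous (starWeight G v₀) u k := by
  rcases hu with rfl | ⟨i, hi, rfl⟩ | ⟨i, j, hi, -, hj, rfl⟩
  · exact ⟨_, by simp, isWeightedHomogeneous_tGen K _⟩
  · refine ⟨_, ?_, isWeightedHomogeneous_vGen K _ i⟩
    have := neg_one_le_starWeight (G := G) hi
    simp only [starWeight_none]; omega
  · refine ⟨_, ?_, isWeightedHomogeneous_eGen K _ i j⟩
    have := neg_one_le_starWeight (G := G) hj
    simp only [starWeight_none, starWeight_of_adj hi]; omega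

theorem isWeightedHomogeneous_zero_or_isQ8Generator {s : Amb K V}
    (hs : s ∈ {tGen K} ∪ Set.range (vGen K (V := V)) ∪ {p | ∃ i j, G.Adj i j ∧ p = eGen K i j}) :
    IsWeightedHomogeneous (starWeight G v₀) s 0 ∨ IsQ8Generator K G v₀ s := by
  rcases hs with (rfl | ⟨i, rfl⟩) | ⟨i, j, hij, rfl⟩
  · exact Or.inr (Or.inl rfl)
  · by_cases hi : i = v₀
    · subst hi
      exact Or.inl (by simpa using isWeightedHomogeneous_vGen K (starWeight G i) i)
    · exact Or.inr (Or.inr (Or.inl ⟨i, hi, rfl⟩))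
  · have hw := isWeightedHomogeneous_eGen K (starWeight G v₀) i j
    by_cases hi : i = v₀
    · subst hi
      exact Or.inl (by simpa [starWeight_of_adj hij] using hw)
    by_cases hj : j = v₀
    · subst hj
      exact Or.inl (by simpa [starWeight_of_adj hij.symm] using hw)
    by_cases hvi : G.Adj v₀ i
    · exact Or.inr (Or.inr (Or.inr ⟨i, j, hvi, hij, hj, rfl⟩))
    by_cases hvj : G.Adj v₀ j
    · exact Or.inr (Or.inr (Or.inr ⟨j, i, hvj, hij.symm, hi, eGen_comm K i j⟩))
    exact Or.inl <| by
      simpa [starWeight_of_not_adj hi hvi, starWeight_of_not_adj hj hvj] using hw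

end ToricRing

section Q8

variable (K : Type*) [Field K] {n : ℕ} (G : SimpleGraph (Fin n)) (v₀ : Fin n)

theorem mem_Q8_iff (u : RG K G) :
    u ∈ Q8 K G v₀ ↔ weightedHomogeneousComponent (starWeight G v₀) 0 (u : Amb K (Fin n)) = 0 :=
  mem_span_iff_weightedHomogeneousComponent_zero_eq_zero
    (fun _ hu ↦ IsQ8Generator.exists_pos_isWeightedHomogeneous hu)
    (fun _ hs ↦ isWeightedHomogeneous_zero_or_isQ8Generator hs) u

theorem isPrime_Q8 : (Q8 K G v₀).IsPrime :=
  isPrime_span_of_isWeightedHomogeneous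
    (fun _ hu ↦ IsQ8Generator.exists_pos_isWeightedHomogeneous hu)
    (fun _ hs ↦ isWeightedHomogeneous_zero_or_isQ8Generator hs)

theorem tIdeal_le_Q8 : tIdeal K G ≤ Q8 K G v₀ :=
  Ideal.span_mono fun _ hu ↦ Or.inl hu

variable {K G v₀}

theorem notMem_Q8 {u : RG K G}
    (hu : IsWeightedHomogeneous (starWeight G v₀) (u : Amb K (Fin n)) 0)
    (hu₀ : (u : Amb K (Fin n)) ≠ 0) : u ∉ Q8 K G v₀ := by
  rwa [mem_Q8_iff, hu.weightedHomogeneousComponent_same]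

end Q8

theorem ZMod.exists_consecutive_of_odd {m : ℕ} (hm : Odd m) {P : ZMod m → Prop}
    (hP : ∀ p, P p ∨ P (p + 1)) : ∃ p, P p ∧ P (p + 1) := by
  by_contra! h
  have hstep (p : ZMod m) : P (p + 1) ↔ ¬ P p := by
    have := hP p; have := h p; tauto
  have halt (k : ℕ) : P k ↔ (Even k ↔ P 0) := by
    induction k with
    | zero => simp
    | succ k ih => rw [Nat.cast_succ, hstep, ih, Nat.even_add_one]; tauto
  have hm' := halt m
  rw [ZMod.natCast_self] at hm'
  have := Nat.not_even_iff_odd.2 hm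
  tauto

theorem stmt8_general (K : Type*) [Field K] {n : ℕ} (G : SimpleGraph (Fin n))
    (m : ℕ) (c : ZMod m → Fin n) (hc : IsInducedOddCycle G m c)
    (v₀ : Fin n) (hv₀ : v₀ ∉ Set.range c) (hadj : ∀ p, ¬ G.Adj v₀ (c p)) :
    (Q8 K G v₀).IsPrime ∧
      ∃ P ∈ (tIdeal K G).minimalPrimes, P ≤ Q8 K G v₀ ∧ P ≠ P0 K G ∧
        ∀ C : Finset (Fin n), IsMinVertexCover G C → P ≠ PC K G C := by
  obtain ⟨-, hodd, -, hcycle⟩ := hc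
  have hQ := isPrime_Q8 K G v₀
  obtain ⟨P, hP, hPQ⟩ := Ideal.exists_minimalPrimes_le (tIdeal_le_Q8 K G v₀)
  refine ⟨hQ, P, hP, hPQ, fun hP₀ ↦ ?_, fun C hC hPC ↦ ?_⟩
  · refine notMem_Q8 ?_ (vGen_ne_zero K v₀) (hPQ (hP₀ ▸ vGen_mem_P0 K G v₀))
    simpa using isWeightedHomogeneous_vGen K (starWeight G v₀) v₀
  · have hedge (p : ZMod m) : G.Adj (c p) (c (p + 1)) := (hcycle p (p + 1)).2 (Or.inl rfl)
    obtain ⟨p, hp, hp'⟩ := ZMod.exists_consecutive_of_odd hodd fun p ↦ hC.1 (hedge p)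
    refine notMem_Q8 ?_ (eGen_ne_zero K _ _) (hPQ (hPC ▸ eGen_mem_PC K G (hedge p) hp hp'))
    simpa [starWeight_of_not_adj (fun h ↦ hv₀ ⟨p, h⟩) (hadj p),
      starWeight_of_not_adj (fun h ↦ hv₀ ⟨p + 1, h⟩) (hadj (p + 1))] using
      isWeightedHomogeneous_eGen K (starWeight G v₀) (c p) (c (p + 1))

/-- Let `G` be a connected non-bipartite graph with an induced odd
cycle `G₀` (given by `c`) and a vertex `v₀ ∉ G₀` not adjacent to any vertex of `G₀`.
Then `Q = (t, {x_i t}_{i ≠ v₀}, {x_i x_j t}_{i ∈ N(v₀), j ∈ N(i) \ {v₀}})` is a prime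
ideal of `R_G` containing a minimal prime `P` of `(t)` which is distinct from `P₀`
and from all `P_C`, `C` a minimal vertex cover. -/
theorem stmt8 (K : Type*) [Field K] {n : ℕ} (G : SimpleGraph (Fin n))
    (hconn : G.Connected) (hnb : ¬ G.Colorable 2)
    (m : ℕ) (c : ZMod m → Fin n) (hc : IsInducedOddCycle G m c)
    (v₀ : Fin n) (hv₀ : v₀ ∉ Set.range c) (hadj : ∀ p, ¬ G.Adj v₀ (c p)) :
    (Q8 K G v₀).IsPrime ∧
      ∃ P ∈ (tIdeal K G).minimalPrimes, P ≤ Q8 K G v₀ ∧ P ≠ P0 K G ∧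
        ∀ C : Finset (Fin n), IsMinVertexCover G C → P ≠ PC K G C :=
  stmt8_general K G m c hc v₀ hv₀ hadj
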